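/- arXiv:1801.04023 — 6 statements merged into one kernel-verified Lean document; each statement's English description precedes it below -/
import Mathlib

section
/- Let g ≥ 2 and let B₁, …, B_{2g} ∈ SO(5) be matrices each of the form [[a, b, c, d, 0], [−b, a, d, −c, 0], [e, f, g', h, 0], [f, −e, −h, g', 0], [0, 0, 0, 0, 1]] for some real numbers a, b, c, d, e, f, g', h (depending on the matrix). Then for every generic t ∈ T (i.e., t = (θ₁, θ₂) with θ₁ + θ₂ ∉ 2πℤ and θ₁ − θ₂ ∉ 2πℤ), the product of commutators ∏_{k=1}^{g} [B_{2k−1}, B_{2k}] ≠ t. -/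
open Matrix Real

/-- The maximal torus element of SO(5) with angles `θ₁, θ₂`. -/
noncomputable def torus5 (θ₁ θ₂ : ℝ) : Matrix (Fin 5) (Fin 5) ℝ :=
  !![Real.cos θ₁, -Real.sin θ₁, 0, 0, 0;
     Real.sin θ₁,  Real.cos θ₁, 0, 0, 0;
     0, 0, Real.cos θ₂, -Real.sin θ₂, 0;
     0, 0, Real.sin θ₂,  Real.cos θ₂, 0;
     0, 0, 0, 0, 1]

/-- Membership in SO(5). -/
def SO5 (M : Matrix (Fin 5) (Fin 5) ℝ) : Prop := M * Mᵀ = 1 ∧ M.det = 1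

/-- `(θ₁, θ₂)` is generic: `θ₁ + θ₂ ∉ 2πℤ` and `θ₁ - θ₂ ∉ 2πℤ`. -/
def Generic5 (θ₁ θ₂ : ℝ) : Prop :=
  (¬ ∃ k : ℤ, θ₁ + θ₂ = 2 * Real.pi * k) ∧ (¬ ∃ k : ℤ, θ₁ - θ₂ = 2 * Real.pi * k)

/-- Commutator of matrices: `[P,Q] = P Q P⁻¹ Q⁻¹`. -/
noncomputable def commMat5 (P Q : Matrix (Fin 5) (Fin 5) ℝ) : Matrix (Fin 5) (Fin 5) ℝ :=
  P * Q * P⁻¹ * Q⁻¹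

/-!
On `ℝ⁴ = ℂ²`, with complex structure `diag(J, -J)`, the matrices of the given shape are exactly the
complex-linear ones, so each `Bₖ` is the realification of a complex `2 × 2` matrix, unitary because
`Bₖ` is orthogonal. The product of commutators is therefore the realification of a matrix of
determinant `1`, whereas the torus element is the realification of `diag(e^{iθ₁}, e^{-iθ₂})`, of
determinant `e^{i(θ₁ - θ₂)} ≠ 1`.
-/

/-- Realification for the complex structure `diag(J, -J)` on `ℝ⁴`, extended by `1` on the fifth
coordinate. -/
noncomputable def realify : Matrix (Fin 2) (Fin 2) ℂ →* Matrix (Fin 5) (Fin 5) ℝ where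
  toFun A := !![(A 0 0).re, -(A 0 0).im, (A 0 1).re, (A 0 1).im, 0;
                (A 0 0).im, (A 0 0).re, (A 0 1).im, -(A 0 1).re, 0;
                (A 1 0).re, -(A 1 0).im, (A 1 1).re, (A 1 1).im, 0;
                -(A 1 0).im, -(A 1 0).re, -(A 1 1).im, (A 1 1).re, 0;
                0, 0, 0, 0, 1]
  map_one' := by
    ext i j
    fin_cases i <;> fin_cases j <;> simp
  map_mul' A B := by
    ext i j
    fin_cases i <;> fin_cases j <;>
      simp [Matrix.mul_apply, Fin.sum_univ_two, Fin.sum_univ_five] <;> ring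

noncomputable def complexify (M : Matrix (Fin 5) (Fin 5) ℝ) : Matrix (Fin 2) (Fin 2) ℂ :=
  !![⟨M 0 0, M 1 0⟩, ⟨M 0 2, M 0 3⟩;
     ⟨M 2 0, -M 2 1⟩, ⟨M 2 2, M 2 3⟩]

lemma complexify_realify (A : Matrix (Fin 2) (Fin 2) ℂ) : complexify (realify A) = A := by
  ext i j
  fin_cases i <;> fin_cases j <;> simp [complexify, realify]

lemma realify_injective : Function.Injective realify :=
  Function.LeftInverse.injective complexify_realify

lemma realify_conjTranspose (A : Matrix (Fin 2) (Fin 2) ℂ) : realify Aᴴ = (realify A)ᵀ := by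
  ext i j
  fin_cases i <;> fin_cases j <;> simp [realify]

lemma exists_realify_eq (a b c d e f g' h : ℝ) :
    ∃ A, realify A = !![ a,  b,  c,  d, 0;
                        -b,  a,  d, -c, 0;
                         e,  f, g',  h, 0;
                         f, -e, -h, g', 0;
                         0,  0,  0,  0, 1] :=
  ⟨!![⟨a, -b⟩, ⟨c, d⟩; ⟨e, -f⟩, ⟨g', h⟩], by ext i j; fin_cases i <;> fin_cases j <;> simp [realify]⟩

lemma mul_conjTranspose_eq_one_of_realify {A : Matrix (Fin 2) (Fin 2) ℂ}
    (hA : realify A * (realify A)ᵀ = 1) : A * Aᴴ = 1 :=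
  realify_injective <| by rw [map_mul, realify_conjTranspose, hA, map_one]

lemma torus5_eq_realify (θ₁ θ₂ : ℝ) :
    torus5 θ₁ θ₂ =
      realify (diagonal ![Complex.exp (θ₁ * Complex.I), Complex.exp (-θ₂ * Complex.I)]) := by
  ext i j
  fin_cases i <;> fin_cases j <;>
    simp [torus5, realify, Complex.exp_ofReal_mul_I_re, Complex.exp_ofReal_mul_I_im,
      ← Complex.ofReal_neg]

noncomputable def specialRealified : Submonoid (Matrix (Fin 5) (Fin 5) ℝ) :=
  (MonoidHom.mker (detMonoidHom : Matrix (Fin 2) (Fin 2) ℂ →* ℂ)).map realify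

lemma Matrix.det_commutator_of_mul_conjTranspose_eq_one {n : Type*} [Fintype n] [DecidableEq n]
    {A B : Matrix n n ℂ} (hA : A * Aᴴ = 1) (hB : B * Bᴴ = 1) : (A * B * Aᴴ * Bᴴ).det = 1 := by
  have hA' := congrArg det hA
  have hB' := congrArg det hB
  simp only [det_mul, det_one] at hA' hB' ⊢
  linear_combination (B.det * Bᴴ.det) * hA' + hB'

lemma commMat5_mem_specialRealified {P Q : Matrix (Fin 5) (Fin 5) ℝ} (hP : P * Pᵀ = 1)
    (hQ : Q * Qᵀ = 1) (hPr : P ∈ Set.range realify) (hQr : Q ∈ Set.range realify) :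
    commMat5 P Q ∈ specialRealified := by
  obtain ⟨A, rfl⟩ := hPr
  obtain ⟨B, rfl⟩ := hQr
  refine ⟨A * B * Aᴴ * Bᴴ, ?_, ?_⟩
  · exact det_commutator_of_mul_conjTranspose_eq_one (mul_conjTranspose_eq_one_of_realify hP)
      (mul_conjTranspose_eq_one_of_realify hQ)
  · rw [commMat5, inv_eq_right_inv hP, inv_eq_right_inv hQ]
    simp only [map_mul, realify_conjTranspose]

lemma torus5_mem_specialRealified_iff (θ₁ θ₂ : ℝ) :
    torus5 θ₁ θ₂ ∈ specialRealified ↔ ∃ k : ℤ, θ₁ - θ₂ = 2 * π * k := by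
  rw [torus5_eq_realify, specialRealified, Submonoid.mem_map_iff_mem realify_injective,
    MonoidHom.mem_mker, coe_detMonoidHom, det_diagonal, Fin.prod_univ_two]
  simp only [Matrix.cons_val_zero, Matrix.cons_val_one, ← Complex.exp_add]
  have hexp : Complex.exp (θ₁ * Complex.I + -θ₂ * Complex.I) = Circle.exp (θ₁ - θ₂) := by
    rw [Circle.coe_exp]; push_cast; ring_nf
  rw [hexp, Circle.coe_eq_one, Circle.exp_eq_one]
  simp only [mul_comm]

theorem stmt1 (g : ℕ) (B : Fin (2*g) → Matrix (Fin 5) (Fin 5) ℝ)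
    (hSO : ∀ k, SO5 (B k))
    (hform : ∀ k, ∃ a b c d e f g' h : ℝ,
      B k = !![ a,  b,  c,  d, 0;
               -b,  a,  d, -c, 0;
                e,  f, g',  h, 0;
                f, -e, -h, g', 0;
                0,  0,  0,  0, 1])
    (θ₁ θ₂ : ℝ) (hgen : Generic5 θ₁ θ₂) :
    ((List.finRange g).map (fun k =>
        commMat5 (B ⟨2*k.val, by have := k.isLt; omega⟩)
                 (B ⟨2*k.val+1, by have := k.isLt; omega⟩))).prod
      ≠ torus5 θ₁ θ₂ := by
  have hrange : ∀ k, B k ∈ Set.range realify := fun k => by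
    obtain ⟨a, b, c, d, e, f, g', h, hB⟩ := hform k
    obtain ⟨A, hA⟩ := exists_realify_eq a b c d e f g' h
    exact ⟨A, hA.trans hB.symm⟩
  intro hprod
  refine hgen.2 ((torus5_mem_specialRealified_iff θ₁ θ₂).1 (hprod ▸ ?_))
  refine Submonoid.list_prod_mem _ fun M hM => ?_
  obtain ⟨k, -, rfl⟩ := List.mem_map.1 hM
  exact commMat5_mem_specialRealified (hSO _).1 (hSO _).1 (hrange _) (hrange _)
end

section
/- Let g ≥ 2, let X be a finite subset of ℕ with |X| = m > 3, and let p ∈ ℚ[Y(X)] be a monomial of total degree at least 2gm(m−1) − m + 1. Then there exists z ∈ X such that, writing p = q_z · r_z with q_z a monomial in the variables of Y(X ∖ {z}) and r_z a monomial in the variables of Y_z(X), the degree of q_z is at least 2g(m−1)(m−2) − m + 2. -/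
open MvPolynomial

/-- Elements of the finite set `X ⊆ ℕ`. -/
abbrev El (X : Finset ℕ) : Type := {x : ℕ // x ∈ X}

/-- The set of variables `Y(X)`: `y⁺_{ij}` (sign `true`) for `i, j ∈ X`, and
`y⁻_{ij}` (sign `false`) for `i ≠ j ∈ X`. -/
abbrev YIdx (X : Finset ℕ) : Type :=
  {v : Bool × El X × El X // v.1 = false → v.2.1 ≠ v.2.2}

/-- `p` is a monomial (a single term). -/
def IsMonomial {X : Finset ℕ} (p : MvPolynomial (YIdx X) ℚ) : Prop :=
  ∃ (d : YIdx X →₀ ℕ) (c : ℚ), p = MvPolynomial.monomial d c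

/-- Variables of `Y(X \ {z})`: both indices differ from `z`. -/
def offVar (X : Finset ℕ) (z : ℕ) : Set (YIdx X) :=
  {v | v.1.2.1.val ≠ z ∧ v.1.2.2.val ≠ z}

/-- Variables of `Y_z(X)`: some index equals `z`. -/
def onVar (X : Finset ℕ) (z : ℕ) : Set (YIdx X) :=
  {v | v.1.2.1.val = z ∨ v.1.2.2.val = z}

theorem stmt7 (g : ℕ) (hg : 2 ≤ g) (X : Finset ℕ) (m : ℕ) (hm : X.card = m)
    (hm3 : 3 < m) (p : MvPolynomial (YIdx X) ℚ) (hp : IsMonomial p)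
    (hdeg : (2*(g:ℚ)*m*(m-1) - m + 1) ≤ p.totalDegree) :
    ∃ z ∈ X, ∃ q r : MvPolynomial (YIdx X) ℚ,
      IsMonomial q ∧ q ∈ MvPolynomial.supported ℚ (offVar X z) ∧
      IsMonomial r ∧ r ∈ MvPolynomial.supported ℚ (onVar X z) ∧
      p = q * r ∧ (2*(g:ℚ)*(m-1)*(m-2) - m + 2) ≤ q.totalDegree := by
  classical
  obtain ⟨d, c, rfl⟩ := hp
  have hmQ : (4:ℚ) ≤ m := by exact_mod_cast hm3
  have hgQ : (2:ℚ) ≤ g := by exact_mod_cast hg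
  have hc : c ≠ 0 := by
    rintro rfl
    rw [map_zero, totalDegree_zero] at hdeg
    push_cast at hdeg
    have h8 : (8:ℚ) ≤ (g:ℚ)*m := by nlinarith
    nlinarith
  set D : ℕ := d.sum fun _ e => e with hD
  have htd : (monomial d c).totalDegree = D := totalDegree_monomial d hc
  set s : ℕ → ℕ := fun z =>
    ∑ v ∈ d.support, if v.1.2.1.val = z ∨ v.1.2.2.val = z then d v else 0 with hs
  have hsum : ∑ z ∈ X, s z ≤ 2 * D := by
    rw [hs]
    rw [Finset.sum_comm]
    have hb : ∀ v ∈ d.support,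
        (∑ z ∈ X, if v.1.2.1.val = z ∨ v.1.2.2.val = z then d v else 0) ≤ 2 * d v := by
      intro v _
      rw [Finset.sum_ite, Finset.sum_const_zero, add_zero, Finset.sum_const]
      have hsub : X.filter (fun z => v.1.2.1.val = z ∨ v.1.2.2.val = z) ⊆
          {v.1.2.1.val, v.1.2.2.val} := by
        intro z hz
        simp only [Finset.mem_filter] at hz
        rcases hz.2 with h | h <;> simp [h.symm]
      have := Finset.card_le_card hsub
      have h2 : ({v.1.2.1.val, v.1.2.2.val} : Finset ℕ).card ≤ 2 :=
        Finset.card_insert_le _ _ |>.trans (by simp)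
      rw [smul_eq_mul]
      exact Nat.mul_le_mul_right _ (this.trans h2)
    calc ∑ v ∈ d.support, (∑ z ∈ X, if v.1.2.1.val = z ∨ v.1.2.2.val = z then d v else 0)
        ≤ ∑ v ∈ d.support, 2 * d v := Finset.sum_le_sum hb
      _ = 2 * D := by rw [← Finset.mul_sum]; rfl
  have hex : ∃ z ∈ X, m * s z ≤ 2 * D := by
    by_contra hcon
    push_neg at hcon
    have : ∑ z ∈ X, (2 * D + 1) ≤ ∑ z ∈ X, m * s z :=
      Finset.sum_le_sum fun z hz => hcon z hz
    rw [Finset.sum_const, hm, smul_eq_mul] at this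
    have : m * (2 * D + 1) ≤ m * ∑ z ∈ X, s z := by
      rw [Finset.mul_sum]; exact this
    have := le_of_mul_le_mul_left this (by omega : 0 < m)
    omega
  obtain ⟨z, hzX, hzs⟩ := hex
  refine ⟨z, hzX, ?_⟩
  set P : YIdx X → Prop := fun v => v.1.2.1.val = z ∨ v.1.2.2.val = z with hP
  set don := d.filter P with hdon
  set doff := d.filter (fun v => ¬ P v) with hdoff
  have hsplit : doff + don = d := by
    rw [hdoff, hdon, add_comm]
    exact Finsupp.filter_pos_add_filter_neg d P
  refine ⟨monomial doff 1, monomial don c, ⟨doff, 1, rfl⟩, ?_, ⟨don, c, rfl⟩, ?_, ?_, ?_⟩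
  · rw [MvPolynomial.mem_supported, vars_monomial one_ne_zero]
    intro v hv
    simp only [hdoff, Finsupp.support_filter, Finset.coe_filter, Set.mem_setOf_eq, hP,
      not_or] at hv
    exact ⟨hv.2.1, hv.2.2⟩
  · rw [MvPolynomial.mem_supported, vars_monomial hc]
    intro v hv
    simp only [hdon, Finsupp.support_filter, Finset.coe_filter, Set.mem_setOf_eq, hP] at hv
    exact hv.2
  · rw [monomial_mul, one_mul, hsplit]
  · -- degree bound
    have hqd : (monomial doff (1:ℚ)).totalDegree = doff.sum fun _ e => e :=
      totalDegree_monomial doff one_ne_zero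
    have hdonsum : (don.sum fun _ e => e) = s z := by
      rw [hdon]
      rw [Finsupp.sum_filter_index, Finsupp.support_filter, Finset.sum_filter]
    have hDsplit : (doff.sum fun _ e => e) + s z = D := by
      rw [← hdonsum, hD, ← hsplit, Finsupp.sum_add_index] <;> simp
    rw [hqd]
    have hDle : (2*(g:ℚ)*m*(m-1) - m + 1) ≤ (D:ℚ) := by rwa [htd] at hdeg
    have h1 : (m:ℚ) * s z ≤ 2 * D := by exact_mod_cast hzs
    have h2 : ((doff.sum fun _ e => e : ℕ) : ℚ) = (D:ℚ) - s z := by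
      have := hDsplit
      push_cast [← this]
      ring
    rw [h2]
    have hm0 : (0:ℚ) < m := by linarith
    have key : (m:ℚ) * (2*(g:ℚ)*(m-1)*(m-2) - m + 2) ≤ m * ((D:ℚ) - s z) := by
      nlinarith [mul_le_mul_of_nonneg_left hDle (by linarith : (0:ℚ) ≤ (m:ℚ) - 2)]
    exact le_of_mul_le_mul_left key hm0
end

section
/- Let X be a finite set, let z ∈ X, and let X ∖ {z} = E ⊔ F be a partition into nonempty sets. Let B = E × F ∈ 𝓑[X ∖ {z}] and let C ∈ 𝓑[F ∪ {z}]. Then there exists a block D ∈ 𝓑[X] such that D ∪ D̄ ⊆ B ∪ B̄ ∪ C ∪ C̄. -/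
/-- The transpose `B̄` of a set of pairs. -/
def trB {α : Type*} [DecidableEq α] (B : Finset (α × α)) : Finset (α × α) :=
  B.image Prod.swap

/-- A block in `X × X`: a set of the form `V × (X \ V)` with `∅ ⊊ V ⊊ X`. -/
def IsBlockOn {α : Type*} [DecidableEq α] (X : Finset α) (B : Finset (α × α)) : Prop :=
  ∃ V : Finset α, V ⊆ X ∧ V.Nonempty ∧ V ≠ X ∧ B = V ×ˢ (X \ V)

lemma mem_trB {α : Type*} [DecidableEq α] {B : Finset (α × α)} {p : α × α} :
    p ∈ trB B ↔ p.swap ∈ B := by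
  constructor
  · intro h
    simp only [trB, Finset.mem_image] at h
    obtain ⟨a, ha, rfl⟩ := h
    simpa using ha
  · intro h
    simp only [trB, Finset.mem_image]
    exact ⟨p.swap, h, by simp⟩

theorem stmt10 {α : Type*} [DecidableEq α] (X : Finset α) (z : α) (hz : z ∈ X)
    (E F : Finset α) (hE : E.Nonempty) (hF : F.Nonempty) (hEF : Disjoint E F)
    (hpart : E ∪ F = X \ {z})
    (B : Finset (α × α)) (hB : B = E ×ˢ F)
    (C : Finset (α × α)) (hC : IsBlockOn (F ∪ {z}) C) :
    ∃ D : Finset (α × α), IsBlockOn X D ∧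
      D ∪ trB D ⊆ B ∪ trB B ∪ C ∪ trB C := by
  obtain ⟨W, hWsub, hWne, hWneq, hCeq⟩ := hC
  have hFX : ∀ x ∈ F, x ∈ X ∧ x ≠ z := by
    intro x hx
    have : x ∈ E ∪ F := Finset.mem_union_right _ hx
    rw [hpart, Finset.mem_sdiff, Finset.mem_singleton] at this
    exact this
  have hEX : ∀ x ∈ E, x ∈ X ∧ x ≠ z := by
    intro x hx
    have : x ∈ E ∪ F := Finset.mem_union_left _ hx
    rw [hpart, Finset.mem_sdiff, Finset.mem_singleton] at this
    exact this
  have hXmem : ∀ x ∈ X, x = z ∨ x ∈ E ∨ x ∈ F := by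
    intro x hx
    by_cases h : x = z
    · exact Or.inl h
    · right
      have : x ∈ E ∪ F := by
        rw [hpart, Finset.mem_sdiff, Finset.mem_singleton]; exact ⟨hx, h⟩
      simpa [Finset.mem_union] using this
  by_cases hzW : z ∈ W
  · -- V = F \ W
    have hWne' : (F \ W).Nonempty := by
      obtain ⟨w, hw⟩ := Finset.exists_of_ssubset (hWsub.ssubset_of_ne hWneq)
      refine ⟨w, Finset.mem_sdiff.mpr ⟨?_, hw.2⟩⟩
      rcases Finset.mem_union.mp hw.1 with h | h
      · exact h
      · exact absurd (Finset.mem_singleton.mp h ▸ hzW) hw.2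
    refine ⟨(F \ W) ×ˢ (X \ (F \ W)), ⟨F \ W, ?_, hWne', ?_, rfl⟩, ?_⟩
    · intro x hx; exact (hFX x (Finset.mem_sdiff.mp hx).1).1
    · intro h
      obtain ⟨e, he⟩ := hE
      have : e ∈ F \ W := h ▸ (hEX e he).1
      exact Finset.disjoint_left.mp hEF he (Finset.mem_sdiff.mp this).1
    · rintro ⟨a, b⟩ hab
      have key : ∀ a b : α, a ∈ F \ W → b ∈ X \ (F \ W) →
          (a, b) ∈ B ∪ trB B ∪ C ∪ trB C ∧ (b, a) ∈ B ∪ trB B ∪ C ∪ trB C := by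
        intro a b ha hb
        obtain ⟨haF, haW⟩ := Finset.mem_sdiff.mp ha
        obtain ⟨hbX, hbW⟩ := Finset.mem_sdiff.mp hb
        have haC : a ∈ (F ∪ {z}) \ W := by
          simp [Finset.mem_sdiff, haF, haW]
        rcases hXmem b hbX with rfl | hbE | hbF
        · -- b = z ∈ W : (a,z) ∈ trB C, (z,a) ∈ C
          constructor
          · refine Finset.mem_union_right _ (mem_trB.mpr ?_)
            rw [hCeq]; exact Finset.mem_product.mpr ⟨hzW, haC⟩
          · refine Finset.mem_union_left _ (Finset.mem_union_right _ ?_)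
            rw [hCeq]; exact Finset.mem_product.mpr ⟨hzW, haC⟩
        · -- b ∈ E : (a,b) ∈ trB B, (b,a) ∈ B
          constructor
          · refine Finset.mem_union_left _ (Finset.mem_union_left _ (Finset.mem_union_right _ (mem_trB.mpr ?_)))
            rw [hB]; exact Finset.mem_product.mpr ⟨hbE, haF⟩
          · refine Finset.mem_union_left _ (Finset.mem_union_left _ (Finset.mem_union_left _ ?_))
            rw [hB]; exact Finset.mem_product.mpr ⟨hbE, haF⟩
        · -- b ∈ F, b ∉ F\W so b ∈ W : (a,b) ∈ trB C, (b,a) ∈ C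
          have hbW' : b ∈ W := by
            by_contra h
            exact hbW (Finset.mem_sdiff.mpr ⟨hbF, h⟩)
          constructor
          · refine Finset.mem_union_right _ (mem_trB.mpr ?_)
            rw [hCeq]; exact Finset.mem_product.mpr ⟨hbW', haC⟩
          · refine Finset.mem_union_left _ (Finset.mem_union_right _ ?_)
            rw [hCeq]; exact Finset.mem_product.mpr ⟨hbW', haC⟩
      rcases Finset.mem_union.mp hab with h | h
      · obtain ⟨ha, hb⟩ := Finset.mem_product.mp h
        exact (key a b ha hb).1
      · have := mem_trB.mp h
        obtain ⟨hb, ha⟩ := Finset.mem_product.mp this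
        exact (key b a hb ha).2
  · -- z ∉ W, so W ⊆ F; V = W
    have hWF : W ⊆ F := by
      intro x hx
      rcases Finset.mem_union.mp (hWsub hx) with h | h
      · exact h
      · exact absurd (Finset.mem_singleton.mp h ▸ hx) hzW
    refine ⟨W ×ˢ (X \ W), ⟨W, ?_, hWne, ?_, rfl⟩, ?_⟩
    · intro x hx; exact (hFX x (hWF hx)).1
    · intro h; exact hzW (h ▸ hz)
    · rintro ⟨a, b⟩ hab
      have key : ∀ a b : α, a ∈ W → b ∈ X \ W →
          (a, b) ∈ B ∪ trB B ∪ C ∪ trB C ∧ (b, a) ∈ B ∪ trB B ∪ C ∪ trB C := by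
        intro a b ha hb
        obtain ⟨hbX, hbW⟩ := Finset.mem_sdiff.mp hb
        have haF : a ∈ F := hWF ha
        rcases hXmem b hbX with rfl | hbE | hbF
        · -- b = z ∉ W : (a,z) ∈ C, (z,a) ∈ trB C
          have hbC : b ∈ (F ∪ {b}) \ W := by simp [Finset.mem_sdiff, hzW]
          constructor
          · refine Finset.mem_union_left _ (Finset.mem_union_right _ ?_)
            rw [hCeq]; exact Finset.mem_product.mpr ⟨ha, hbC⟩
          · refine Finset.mem_union_right _ (mem_trB.mpr ?_)
            rw [hCeq]; exact Finset.mem_product.mpr ⟨ha, hbC⟩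
        · constructor
          · refine Finset.mem_union_left _ (Finset.mem_union_left _ (Finset.mem_union_right _ (mem_trB.mpr ?_)))
            rw [hB]; exact Finset.mem_product.mpr ⟨hbE, haF⟩
          · refine Finset.mem_union_left _ (Finset.mem_union_left _ (Finset.mem_union_left _ ?_))
            rw [hB]; exact Finset.mem_product.mpr ⟨hbE, haF⟩
        · have hbC : b ∈ (F ∪ {z}) \ W := by simp [Finset.mem_sdiff, hbF, hbW]
          constructor
          · refine Finset.mem_union_left _ (Finset.mem_union_right _ ?_)
            rw [hCeq]; exact Finset.mem_product.mpr ⟨ha, hbC⟩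
          · refine Finset.mem_union_right _ (mem_trB.mpr ?_)
            rw [hCeq]; exact Finset.mem_product.mpr ⟨ha, hbC⟩
      rcases Finset.mem_union.mp hab with h | h
      · obtain ⟨ha, hb⟩ := Finset.mem_product.mp h
        exact (key a b ha hb).1
      · have := mem_trB.mp h
        obtain ⟨hb, ha⟩ := Finset.mem_product.mp this
        exact (key b a hb ha).2
end

section
/- Let g ≥ 2, let X be a finite subset of ℕ with |X| = m ≥ 2, let B = V × V^c ∈ 𝓑[X] be a block, and let z ∈ V^c. Let p ∈ ℚ[Y(X)] be a homogeneous polynomial of degree at least 2gm(m−1) − m + 1 − (m−1)(m−2)g. Then [p] has a representative in the subring ℚ[Y⁻_B(X) ∪ {y^{−ε_V(i)}_{iz} : i ∈ X ∖ {z}}] which is a sum of monomials, each of which, when factorised as q · r with q a monomial in the variables Y⁻_B(X) and r a monomial in the variables {y^{−ε_V(i)}_{iz} : i ∈ X ∖ {z}}, satisfies: either deg q ≥ m(m−1)g − m + 2, or r is divisible by ∏_{i ∈ X ∖ {z}} (y^{−ε_V(i)}_{iz})^{2g}. -/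
open MvPolynomial

/-- The variable `y^s_{ij}` (with the convention that `y⁻_{ii} = 0`). -/
noncomputable def yv {X : Finset ℕ} (s : Bool) (i j : El X) :
    MvPolynomial (YIdx X) ℚ :=
  if h : s = false → i ≠ j then MvPolynomial.X ⟨(s, i, j), h⟩ else 0

/-- The ideal `I(X)` of relations. -/
noncomputable def relIdeal (X : Finset ℕ) : Ideal (MvPolynomial (YIdx X) ℚ) :=
  Ideal.span
    ({p | ∃ i j : El X, p = yv false i j + yv false j i} ∪
     {p | ∃ i j : El X, p = yv true i j - yv true j i} ∪
     {p | ∃ i j k : El X, p = yv false i j + yv false j k + yv false k i} ∪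
     {p | ∃ i j k : El X, p = yv true i j - yv true j k + yv false k i})

/-- The quotient map to `R(X) = ℚ[Y(X)]/I(X)`. -/
noncomputable def rmk (X : Finset ℕ) :
    MvPolynomial (YIdx X) ℚ →+* MvPolynomial (YIdx X) ℚ ⧸ relIdeal X :=
  Ideal.Quotient.mk (relIdeal X)

/-- The sign `ε_B(i,j)` (as a `Bool`, `true` = `+1`) of the block `B = V × Vᶜ`:
`+1` iff `(i,j) ∈ B ∪ B̄`. -/
def epsb {X : Finset ℕ} (V : Finset (El X)) (i j : El X) : Bool :=
  xor (decide (i ∈ V)) (decide (j ∈ V))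

/-- The variable set `Y⁻_B(X) = {y^{ε_B(i,j)}_{ij} : i ≠ j}` for `B = V × Vᶜ`.
(For `V = ∅` this is `Y⁻(X)`.) -/
def YmB {X : Finset ℕ} (V : Finset (El X)) : Set (YIdx X) :=
  {v | v.1.2.1 ≠ v.1.2.2 ∧ v.1.1 = epsb V v.1.2.1 v.1.2.2}

/-- The variables `y^{-eps_V(i)}_{iz}` for `i ∈ X \ {z}`: second index `z`, sign
minus iff `i ∈ V`. -/
def zCol {X : Finset ℕ} (V : Finset (El X)) (z : El X) : Set (YIdx X) :=
  {v | v.1.2.2 = z ∧ v.1.2.1 ≠ z ∧ v.1.1 = !(decide (v.1.2.1 ∈ V))}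

/-!
In `R(X)` every variable is a linear form in the classes `x_a = [y⁺_{aa}]`, namely
`[y^±_{ij}] = (x_i ± x_j)/2`. For `i ≠ z` put `b_i = [y^{ε_V(i)}_{iz}]`, a variable of `Y⁻_B(X)`,
and `c_i = [y^{-ε_V(i)}_{iz}]`. These span all linear forms (`x_i = b_i + c_i`, and
`x_z = ±(b_w - c_w)` for any `w ∈ V`), so `[p]` is a combination of monomials `b^α c^β` of degree
`deg p`. As `c_i - b_i = -ε_V(i) x_z`, we have `c_j = b_j + ε_V(i) ε_V(j) (c_i - b_i)`. If `|α|` is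
small and some `β_i < 2g`, the degree bound forces some `β_j > 2g`, and rewriting one factor `c_j`
by this identity gives three monomials, each with larger `|α|` or with `β_i` closer to `2g`.
-/

section Exchange

variable {ι : Type*}

theorem exists_eq_add_single [DecidableEq ι] {β : ι → ℕ} {j : ι} (hj : 0 < β j) :
    ∃ β₀, β = β₀ + (Pi.single j 1 : ι → ℕ) :=
  ⟨β - Pi.single j 1, by
    ext l
    simp only [Pi.add_apply, Pi.sub_apply, Pi.single_apply]
    split_ifs <;> subst_vars <;> omega⟩

theorem exists_lt_apply_of_mul_card_le_sum [Fintype ι] {β : ι → ℕ} {k : ℕ}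
    (hβ : k * Fintype.card ι ≤ ∑ l, β l) {i : ι} (hi : β i < k) : ∃ j, k < β j := by
  by_contra! hle
  have hlt : ∑ l, β l < ∑ _l : ι, k := Finset.sum_lt_sum (fun l _ => hle l) ⟨i, by simp, hi⟩
  rw [Finset.sum_const, Finset.card_univ, smul_eq_mul, mul_comm] at hlt
  omega

variable [Fintype ι] [DecidableEq ι]

theorem prod_pow_add_single {M : Type*} [CommMonoid M] (f : ι → M) (α : ι → ℕ) (j : ι) :
    ∏ i, f i ^ (α + Pi.single j 1 : ι → ℕ) i = f j * ∏ i, f i ^ α i := by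
  simp only [Pi.add_apply, pow_add, Finset.prod_mul_distrib, Pi.single_apply, pow_ite, pow_one,
    pow_zero, Finset.prod_ite_eq', Finset.mem_univ, if_true, mul_comm]

theorem sum_add_single (α : ι → ℕ) (j : ι) :
    ∑ i, (α + Pi.single j 1 : ι → ℕ) i = ∑ i, α i + 1 := by
  simp [Finset.sum_add_distrib]

open Pointwise in
theorem exists_prod_pow_of_mem_range_pow {M : Type*} [CommMonoid M] {f : ι → M} {n : ℕ} {x : M}
    (hx : x ∈ Set.range f ^ n) : ∃ γ : ι → ℕ, ∑ l, γ l = n ∧ x = ∏ l, f l ^ γ l := by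
  induction n generalizing x with
  | zero => exact ⟨0, by simp, by simpa using hx⟩
  | succ n ih =>
    obtain ⟨y, hy, _, ⟨l, rfl⟩, rfl⟩ := Set.mem_mul.mp (pow_succ (Set.range f) n ▸ hx)
    obtain ⟨γ, rfl, rfl⟩ := ih hy
    exact ⟨γ + Pi.single l 1, sum_add_single γ l, by rw [prod_pow_add_single, mul_comm]⟩

variable {R T : Type*} [CommRing R] [CommRing T] [Algebra R T]

theorem prod_pow_mul_prod_pow_exchange {b c : ι → T} {e : ι → R} (he : ∀ i, e i * e i = 1)
    {w : T} (hc : ∀ i, c i = b i + e i • w) (α β : ι → ℕ) (i j : ι) :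
    (∏ l, b l ^ α l) * ∏ l, c l ^ (β + Pi.single j 1 : ι → ℕ) l =
      (∏ l, b l ^ (α + Pi.single j 1 : ι → ℕ) l) * (∏ l, c l ^ β l) +
        (e i * e j) • ((∏ l, b l ^ α l) * (∏ l, c l ^ (β + Pi.single i 1 : ι → ℕ) l) -
          (∏ l, b l ^ (α + Pi.single i 1 : ι → ℕ) l) * ∏ l, c l ^ β l) := by
  have he' : algebraMap R T (e i) * algebraMap R T (e i) = 1 := by rw [← map_mul, he, map_one]
  simp only [prod_pow_add_single, hc i, hc j, Algebra.smul_def, map_mul]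
  linear_combination (-algebraMap R T (e j) * w * (∏ l, b l ^ α l) * ∏ l, c l ^ β l) * he'

def reducedMonomials (b c : ι → T) (D k : ℕ) : Set T :=
  {x | ∃ α β : ι → ℕ, (D ≤ ∑ i, α i ∨ ∀ i, k ≤ β i) ∧ x = (∏ i, b i ^ α i) * ∏ i, c i ^ β i}

theorem prod_pow_mul_prod_pow_mem_span_reducedMonomials {b c : ι → T} {e : ι → R}
    (he : ∀ i, e i * e i = 1) {w : T} (hc : ∀ i, c i = b i + e i • w) {D k d : ℕ}
    (hd : D + k * Fintype.card ι ≤ d + 1) (α β : ι → ℕ) (hαβ : ∑ i, α i + ∑ i, β i = d) :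
    (∏ i, b i ^ α i) * ∏ i, c i ^ β i ∈ Submodule.span R (reducedMonomials b c D k) := by
  induction hμ : (D - ∑ i, α i) + ∑ i, (k - β i) using Nat.strong_induction_on
    generalizing α β with
  | _ μ ih =>
  by_cases hred : D ≤ ∑ i, α i ∨ ∀ i, k ≤ β i
  · exact Submodule.subset_span ⟨α, β, hred, rfl⟩
  push Not at hred
  obtain ⟨hα, i, hi⟩ := hred
  have hβ : k * Fintype.card ι ≤ ∑ l, β l := by omega
  obtain ⟨j, hj⟩ := exists_lt_apply_of_mul_card_le_sum hβ hi
  have hij : i ≠ j := by rintro rfl; omega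
  obtain ⟨β, rfl⟩ := exists_eq_add_single (β := β) (j := j) (by omega)
  simp only [Pi.add_apply, Pi.single_eq_same, Pi.single_eq_of_ne hij, add_zero] at hi hj
  rw [sum_add_single] at hαβ
  have hμj : ∑ l, (k - (β + Pi.single j 1 : ι → ℕ) l) = ∑ l, (k - β l) :=
    Finset.sum_congr rfl fun l _ => by
      simp only [Pi.add_apply, Pi.single_apply]; split_ifs <;> subst_vars <;> omega
  have hμi : ∑ l, (k - (β + Pi.single i 1 : ι → ℕ) l) < ∑ l, (k - β l) :=
    Finset.sum_lt_sum (fun l _ => by simp only [Pi.add_apply]; omega)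
      ⟨i, Finset.mem_univ i, by simp only [Pi.add_apply, Pi.single_eq_same]; omega⟩
  rw [hμj] at hμ
  rw [prod_pow_mul_prod_pow_exchange he hc α β i j]
  refine Submodule.add_mem _ ?_ (Submodule.smul_mem _ _ (Submodule.sub_mem _ ?_ ?_))
  · exact ih _ (by rw [sum_add_single]; omega) _ _ (by rw [sum_add_single]; omega) rfl
  · exact ih _ (by omega) _ _ (by rw [sum_add_single]; omega) rfl
  · exact ih _ (by rw [sum_add_single]; omega) _ _ (by rw [sum_add_single]; omega) rfl

open Pointwise in
theorem span_range_pow_le_span_reducedMonomials {b c : ι → T} {e : ι → R}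
    (he : ∀ i, e i * e i = 1) {w : T} (hc : ∀ i, c i = b i + e i • w) {D k d : ℕ}
    (hd : D + k * Fintype.card ι ≤ d + 1) :
    Submodule.span R (Set.range (Sum.elim b c) ^ d) ≤
      Submodule.span R (reducedMonomials b c D k) := by
  refine Submodule.span_le.mpr fun x hx => ?_
  obtain ⟨γ, hγ, rfl⟩ := exists_prod_pow_of_mem_range_pow hx
  rw [Fintype.prod_sum_type]
  exact prod_pow_mul_prod_pow_mem_span_reducedMonomials he hc hd _ _
    (by rw [← hγ, Fintype.sum_sum_type])

end Exchange

open Pointwise in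
theorem aeval_mem_span_pow_of_isHomogeneous {σ R A : Type*} [CommSemiring R] [CommSemiring A]
    [Algebra R A] {S : Set A} {f : σ → A} (hf : ∀ v, f v ∈ Submodule.span R S)
    {p : MvPolynomial σ R} {n : ℕ} (hp : p.IsHomogeneous n) :
    aeval f p ∈ Submodule.span R (S ^ n) := by
  have hmem : aeval f p ∈ (homogeneousSubmodule σ R n).map (aeval f).toLinearMap := ⟨p, hp, rfl⟩
  rw [← homogeneousSubmodule_one_pow, Submodule.map_pow, homogeneousSubmodule_one_eq_span_X,
    Submodule.map_span, ← Set.range_comp] at hmem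
  rw [← Submodule.span_pow]
  refine pow_le_pow_left' (Submodule.span_le.mpr ?_) n hmem
  exact Set.range_subset_iff.mpr fun v => by simpa using hf v

section Monomials

variable {κ : Type*}

theorem totalDegree_prod_X_pow {σ R : Type*} [CommSemiring R] [Nontrivial R] [NoZeroDivisors R]
    (s : Finset κ) (e : κ → σ) (a : κ → ℕ) :
    (∏ i ∈ s, (MvPolynomial.X (e i) : MvPolynomial σ R) ^ a i).totalDegree = ∑ i ∈ s, a i :=
  (IsHomogeneous.prod s _ a fun _ _ => isHomogeneous_X_pow _ _).totalDegree
    (Finset.prod_ne_zero_iff.mpr fun _ _ => pow_ne_zero _ (X_ne_zero _))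

variable {X : Finset ℕ}

theorem isMonomial_prod_X_pow (s : Finset κ) (e : κ → YIdx X) (a : κ → ℕ) :
    IsMonomial (∏ i ∈ s, MvPolynomial.X (e i) ^ a i) :=
  ⟨∑ i ∈ s, Finsupp.single (e i) (a i), 1, by simp [monomial_sum_one, X_pow_eq_monomial]⟩

theorem IsMonomial.smul {p : MvPolynomial (YIdx X) ℚ} (hp : IsMonomial p) (c : ℚ) :
    IsMonomial (c • p) := by
  obtain ⟨d, c', rfl⟩ := hp
  exact ⟨d, c • c', smul_monomial c⟩

end Monomials

section Quotient

variable {X : Finset ℕ}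

theorem yv_eq_X {s : Bool} {i j : El X} (h : s = false → i ≠ j) :
    yv s i j = MvPolynomial.X ⟨(s, i, j), h⟩ :=
  dif_pos h

theorem rmk_smul (c : ℚ) (p : MvPolynomial (YIdx X) ℚ) : rmk X (c • p) = c • rmk X p :=
  map_smul (Ideal.Quotient.mkₐ ℚ (relIdeal X)) c p

theorem rmk_yv_false_add_swap (i j : El X) :
    rmk X (yv false i j) + rmk X (yv false j i) = 0 := by
  rw [← map_add]
  exact Ideal.Quotient.eq_zero_iff_mem.mpr <| Ideal.subset_span <|
    .inl <| .inl <| .inl ⟨i, j, rfl⟩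

theorem rmk_yv_true_swap (i j : El X) : rmk X (yv true i j) = rmk X (yv true j i) := by
  rw [← sub_eq_zero, ← map_sub]
  exact Ideal.Quotient.eq_zero_iff_mem.mpr <| Ideal.subset_span <|
    .inl <| .inl <| .inr ⟨i, j, rfl⟩

theorem rmk_yv_true_sub_add (i j k : El X) :
    rmk X (yv true i j) - rmk X (yv true j k) + rmk X (yv false k i) = 0 := by
  rw [← map_sub, ← map_add]
  exact Ideal.Quotient.eq_zero_iff_mem.mpr <| Ideal.subset_span <| .inr ⟨i, j, k, rfl⟩

def boolSign : Bool → ℚ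
  | true => 1
  | false => -1

theorem boolSign_mul_self (s : Bool) : boolSign s * boolSign s = 1 := by
  cases s <;> norm_num [boolSign]

theorem rmk_yv (s : Bool) (i j : El X) :
    rmk X (yv s i j) =
      (1 / 2 : ℚ) • (rmk X (yv true i i) + boolSign s • rmk X (yv true j j)) := by
  have h₁ := rmk_yv_true_sub_add i j j
  have h₂ := rmk_yv_true_sub_add j i i
  have h₃ := rmk_yv_true_swap i j
  have h₄ := rmk_yv_false_add_swap i j
  rw [one_div, eq_inv_smul_iff₀ two_ne_zero, two_smul]
  cases s
  · simp only [boolSign, neg_smul, one_smul]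
    linear_combination h₂ - h₁ + h₃ + h₄
  · simp only [boolSign, one_smul]
    linear_combination h₁ + h₂ - h₄ + h₃

end Quotient

section Column

variable {X : Finset ℕ} (V : Finset (El X)) (z : El X)

def blockVar (i : {i : El X // i ≠ z}) : YIdx X :=
  ⟨(epsb V i z, i, z), fun _ => i.2⟩

def columnVar (i : {i : El X // i ≠ z}) : YIdx X :=
  ⟨(!decide (i.1 ∈ V), i, z), fun _ => i.2⟩

theorem blockVar_mem_YmB (i : {i : El X // i ≠ z}) : blockVar V z i ∈ YmB V :=
  ⟨i.2, rfl⟩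

theorem columnVar_mem_zCol (i : {i : El X // i ≠ z}) : columnVar V z i ∈ zCol V z :=
  ⟨rfl, i.2, rfl⟩

theorem prod_compl_yv_eq_prod_columnVar (k : ℕ) :
    ∏ i ∈ ({z} : Finset (El X))ᶜ, yv (!(decide (i ∈ V))) i z ^ k =
      ∏ i : {i : El X // i ≠ z}, MvPolynomial.X (columnVar V z i) ^ k := by
  rw [Finset.prod_subtype (p := fun i => i ≠ z) _ fun i => by simp]
  exact Finset.prod_congr rfl fun i _ => by rw [columnVar, ← yv_eq_X]

variable {V z}

theorem rmk_X_blockVar (hz : z ∉ V) (i : {i : El X // i ≠ z}) :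
    rmk X (MvPolynomial.X (blockVar V z i)) = (1 / 2 : ℚ) •
      (rmk X (yv true i i) + boolSign (decide (i.1 ∈ V)) • rmk X (yv true z z)) := by
  rw [blockVar, ← yv_eq_X, rmk_yv]
  simp [epsb, hz]

theorem rmk_X_columnVar (i : {i : El X // i ≠ z}) :
    rmk X (MvPolynomial.X (columnVar V z i)) = (1 / 2 : ℚ) •
      (rmk X (yv true i i) - boolSign (decide (i.1 ∈ V)) • rmk X (yv true z z)) := by
  rw [columnVar, ← yv_eq_X, rmk_yv]
  cases decide (i.1 ∈ V) <;> simp [boolSign, sub_eq_add_neg]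

theorem rmk_X_columnVar_eq_add (hz : z ∉ V) (i : {i : El X // i ≠ z}) :
    rmk X (MvPolynomial.X (columnVar V z i)) = rmk X (MvPolynomial.X (blockVar V z i)) +
      boolSign (decide (i.1 ∈ V)) • -rmk X (yv true z z) := by
  rw [rmk_X_columnVar, rmk_X_blockVar hz]
  module

theorem rmk_X_mem_of_forall_mem {w : El X} (hw : w ∈ V) (hz : z ∉ V)
    {M : Submodule ℚ (MvPolynomial (YIdx X) ℚ ⧸ relIdeal X)}
    (hb : ∀ i, rmk X (MvPolynomial.X (blockVar V z i)) ∈ M)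
    (hc : ∀ i, rmk X (MvPolynomial.X (columnVar V z i)) ∈ M) (v : YIdx X) :
    rmk X (MvPolynomial.X v) ∈ M := by
  have hx (a : El X) : rmk X (yv true a a) ∈ M := by
    by_cases ha : a = z
    · let w' : {i : El X // i ≠ z} := ⟨w, ne_of_mem_of_not_mem hw hz⟩
      have hxz : rmk X (yv true z z) = boolSign (decide (w ∈ V)) •
          (rmk X (MvPolynomial.X (blockVar V z w')) -
            rmk X (MvPolynomial.X (columnVar V z w'))) := by
        rw [rmk_X_blockVar hz, rmk_X_columnVar]
        match_scalars
        · linear_combination -boolSign_mul_self (decide (w ∈ V))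
        · ring
      rw [ha, hxz]
      exact M.smul_mem _ (M.sub_mem (hb w') (hc w'))
    · have hxa : rmk X (yv true a a) = rmk X (MvPolynomial.X (blockVar V z ⟨a, ha⟩)) +
          rmk X (MvPolynomial.X (columnVar V z ⟨a, ha⟩)) := by
        rw [rmk_X_blockVar hz, rmk_X_columnVar]
        module
      rw [hxa]
      exact M.add_mem (hb _) (hc _)
  obtain ⟨⟨s, i, j⟩, h⟩ := v
  rw [← yv_eq_X, rmk_yv]
  exact M.smul_mem _ (M.add_mem (hx i) (M.smul_mem _ (hx j)))

theorem rmk_mem_span_reducedMonomials {w : El X} (hw : w ∈ V) (hz : z ∉ V)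
    {p : MvPolynomial (YIdx X) ℚ} {d : ℕ} (hp : p.IsHomogeneous d) {D k : ℕ}
    (hd : D + k * Fintype.card {i : El X // i ≠ z} ≤ d + 1) :
    rmk X p ∈ Submodule.span ℚ (reducedMonomials
      (fun i => rmk X (MvPolynomial.X (blockVar V z i)))
      (fun i => rmk X (MvPolynomial.X (columnVar V z i))) D k) := by
  have hp' : rmk X p = aeval (fun v => rmk X (MvPolynomial.X v)) p :=
    congrArg (· p) (aeval_unique (Ideal.Quotient.mkₐ ℚ (relIdeal X)))
  rw [hp']
  refine span_range_pow_le_span_reducedMonomials (fun _ => boolSign_mul_self _)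
    (rmk_X_columnVar_eq_add hz) hd (aeval_mem_span_pow_of_isHomogeneous ?_ hp)
  exact rmk_X_mem_of_forall_mem hw hz
    (fun i => Submodule.subset_span (Set.mem_range_self (Sum.inl i)))
    (fun i => Submodule.subset_span (Set.mem_range_self (Sum.inr i)))

theorem exists_sum_monomials_of_mem_span_reducedMonomials {p : MvPolynomial (YIdx X) ℚ}
    {D k : ℕ} (hp : rmk X p ∈ Submodule.span ℚ (reducedMonomials
      (fun i => rmk X (MvPolynomial.X (blockVar V z i)))
      (fun i => rmk X (MvPolynomial.X (columnVar V z i))) D k)) :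
    ∃ (N : ℕ) (q r : Fin N → MvPolynomial (YIdx X) ℚ),
      (∀ t, IsMonomial (q t) ∧ q t ∈ MvPolynomial.supported ℚ (YmB V) ∧
        IsMonomial (r t) ∧ r t ∈ MvPolynomial.supported ℚ (zCol V z) ∧
        (D ≤ (q t).totalDegree ∨
          (∏ i : {i : El X // i ≠ z}, MvPolynomial.X (columnVar V z i) ^ k) ∣ r t)) ∧
      rmk X p = rmk X (∑ t, q t * r t) := by
  obtain ⟨N, f, x, hx⟩ := Submodule.mem_span_set'.mp hp
  choose α β hred hxeq using fun t => (x t).2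
  refine ⟨N, fun t => ∏ i, MvPolynomial.X (blockVar V z i) ^ α t i,
    fun t => f t • ∏ i, MvPolynomial.X (columnVar V z i) ^ β t i,
    fun t => ⟨isMonomial_prod_X_pow _ _ _, ?_, (isMonomial_prod_X_pow _ _ _).smul _, ?_, ?_⟩, ?_⟩
  · exact Subalgebra.prod_mem _ fun i _ =>
      Subalgebra.pow_mem _ (X_mem_supported.mpr (blockVar_mem_YmB V z i)) _
  · exact Subalgebra.smul_mem _ (Subalgebra.prod_mem _ fun i _ =>
      Subalgebra.pow_mem _ (X_mem_supported.mpr (columnVar_mem_zCol V z i)) _) _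
  · refine (hred t).imp (fun h => ?_) (fun h => ?_)
    · rwa [totalDegree_prod_X_pow]
    · dsimp only
      rw [smul_eq_C_mul]
      exact (Finset.prod_dvd_prod_of_dvd _ _ fun i _ => pow_dvd_pow _ (h i)).mul_left _
  · rw [← hx, map_sum]
    refine Finset.sum_congr rfl fun t _ => ?_
    simp only [hxeq t, rmk_smul, mul_smul_comm, map_mul, map_prod, map_pow]

end Column

theorem exists_degree_threshold {g m dp : ℕ} (hm : 1 ≤ m)
    (hdp : 2 * (g : ℚ) * m * (m - 1) - m + 1 - (m - 1) * (m - 2) * g ≤ dp) :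
    ∃ D : ℕ, D + 2 * g * (m - 1) ≤ dp + 1 ∧ (m : ℚ) * (m - 1) * g - m + 2 ≤ D := by
  obtain ⟨n, rfl⟩ : ∃ n, m = n + 1 := ⟨m - 1, by omega⟩
  have key : (n + 1) * n * g + 2 * g * n ≤ dp + n := by
    have : (((n + 1) * n * g + 2 * g * n : ℕ) : ℚ) ≤ dp + n := by push_cast at hdp ⊢; linarith
    exact_mod_cast this
  have hgn : g = 0 ∨ n ≤ (n + 1) * n * g := by
    rcases Nat.eq_zero_or_pos g with h | h
    · exact .inl h
    · exact .inr ((Nat.le_mul_of_pos_left n n.succ_pos).trans (Nat.le_mul_of_pos_right _ h))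
  refine ⟨(n + 1) * n * g + 1 - n, ?_, ?_⟩
  · rcases hgn with rfl | hgn <;> simp only [Nat.add_sub_cancel] <;> omega
  · rcases le_or_gt n ((n + 1) * n * g + 1) with h | h
    · rw [Nat.cast_sub h]
      exact le_of_eq (by push_cast; ring)
    · have : (((n + 1) * n * g + 1 : ℕ) : ℚ) < n := by exact_mod_cast h
      push_cast at this ⊢
      linarith

theorem stmt15_general (g : ℕ) (X : Finset ℕ)
    (V : Finset (El X)) (hV : V.Nonempty ∧ V ≠ Finset.univ)
    (z : El X) (hz : z ∉ V)
    (p : MvPolynomial (YIdx X) ℚ) (dp : ℕ) (hhom : p.IsHomogeneous dp)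
    (hdp : (2*(g:ℚ)*X.card*(X.card-1) - X.card + 1 - (X.card-1)*(X.card-2)*g) ≤ dp) :
    ∃ (N : ℕ) (q r : Fin N → MvPolynomial (YIdx X) ℚ),
      (∀ t, IsMonomial (q t) ∧ q t ∈ MvPolynomial.supported ℚ (YmB V) ∧
        IsMonomial (r t) ∧ r t ∈ MvPolynomial.supported ℚ (zCol V z) ∧
        (((X.card : ℚ)*(X.card-1)*g - X.card + 2) ≤ (q t).totalDegree ∨
          (∏ i ∈ ({z} : Finset (El X))ᶜ, (yv (!(decide (i ∈ V))) i z)^(2*g)) ∣ r t)) ∧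
      rmk X p = rmk X (∑ t, q t * r t) := by
  obtain ⟨w, hw⟩ := hV.1
  have hcard : Fintype.card {i : El X // i ≠ z} = X.card - 1 := by
    rw [Fintype.card_subtype_compl, Fintype.card_subtype_eq, Fintype.card_coe]
  have hm : 1 ≤ X.card := Finset.card_pos.mpr ⟨z, z.2⟩
  obtain ⟨D, hD, hDq⟩ := exists_degree_threshold hm hdp
  rw [← hcard] at hD
  obtain ⟨N, q, r, hqr, hp⟩ := exists_sum_monomials_of_mem_span_reducedMonomials
    (rmk_mem_span_reducedMonomials hw hz hhom hD)
  refine ⟨N, q, r, fun t => ?_, hp⟩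
  obtain ⟨hq, hqY, hr, hrY, hred⟩ := hqr t
  refine ⟨hq, hqY, hr, hrY, hred.imp (fun h => hDq.trans (by exact_mod_cast h)) fun h => ?_⟩
  rwa [prod_compl_yv_eq_prod_columnVar]

theorem stmt15 (g : ℕ) (hg : 2 ≤ g) (X : Finset ℕ) (hX : 2 ≤ X.card)
    (V : Finset (El X)) (hV : V.Nonempty ∧ V ≠ Finset.univ)
    (z : El X) (hz : z ∉ V)
    (p : MvPolynomial (YIdx X) ℚ) (dp : ℕ) (hhom : p.IsHomogeneous dp)
    (hdp : (2*(g:ℚ)*X.card*(X.card-1) - X.card + 1 - (X.card-1)*(X.card-2)*g) ≤ dp) :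
    ∃ (N : ℕ) (q r : Fin N → MvPolynomial (YIdx X) ℚ),
      (∀ t, IsMonomial (q t) ∧ q t ∈ MvPolynomial.supported ℚ (YmB V) ∧
        IsMonomial (r t) ∧ r t ∈ MvPolynomial.supported ℚ (zCol V z) ∧
        (((X.card : ℚ)*(X.card-1)*g - X.card + 2) ≤ (q t).totalDegree ∨
          (∏ i ∈ ({z} : Finset (El X))ᶜ, (yv (!(decide (i ∈ V))) i z)^(2*g)) ∣ r t)) ∧
      rmk X p = rmk X (∑ t, q t * r t) :=
  stmt15_general g X V hV z hz p dp hhom hdp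
end

section
/- Let n ≥ 2, let X = [n] = {1, …, n}, let B ∈ 𝓑[X] ∪ {∅}, and fix i ∈ X. Then every monomial p ∈ ℚ[Y(X)] is equivalent in R(X) to a sum of terms of the form [q · r], where q is a monomial in the single variable y⁺_{ii} and r is a monomial in the variables Y⁻_B(X); equivalently, the images in R(X) of y⁺_{ii} and of the elements of Y⁻_B(X) generate R(X) as a ℚ-algebra. -/
open MvPolynomial

set_option maxHeartbeats 1000000 in
theorem stmt17 (n : ℕ) (hn : 2 ≤ n) (X : Finset ℕ) (hX : X = Finset.Icc 1 n)
    (V : Finset (El X)) (hV : V = ∅ ∨ (V.Nonempty ∧ V ≠ Finset.univ))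
    (i : El X) (p : MvPolynomial (YIdx X) ℚ) (hp : IsMonomial p) :
    ∃ (N : ℕ) (q r : Fin N → MvPolynomial (YIdx X) ℚ),
      (∀ t, IsMonomial (q t) ∧
        q t ∈ MvPolynomial.supported ℚ {v : YIdx X | v.1 = (true, i, i)} ∧
        IsMonomial (r t) ∧ r t ∈ MvPolynomial.supported ℚ (YmB V)) ∧
      rmk X p = rmk X (∑ t, q t * r t) := by
  classical
  set G : Set (YIdx X) := {v : YIdx X | v.1 = (true, i, i)} ∪ YmB V with hG
  set T : Subalgebra ℚ (MvPolynomial (YIdx X) ℚ ⧸ relIdeal X) :=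
    (MvPolynomial.supported ℚ G).map (Ideal.Quotient.mkₐ ℚ (relIdeal X)) with hT
  -- basic relations in the quotient
  have e0 : ∀ x ∈ relIdeal X, rmk X x = 0 := fun x hx =>
    Ideal.Quotient.eq_zero_iff_mem.mpr hx
  have E1 : ∀ a b : El X, rmk X (yv false a b) + rmk X (yv false b a) = 0 := by
    intro a b
    have := e0 _ (Ideal.subset_span (Or.inl (Or.inl (Or.inl ⟨a, b, rfl⟩))))
    simpa using this
  have E3 : ∀ a b c : El X,
      rmk X (yv false a b) + rmk X (yv false b c) + rmk X (yv false c a) = 0 := by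
    intro a b c
    have := e0 _ (Ideal.subset_span (Or.inl (Or.inr ⟨a, b, c, rfl⟩)))
    simpa using this
  have E4 : ∀ a b c : El X,
      rmk X (yv true a b) - rmk X (yv true b c) + rmk X (yv false c a) = 0 := by
    intro a b c
    have := e0 _ (Ideal.subset_span (Or.inr ⟨a, b, c, rfl⟩))
    simpa using this
  have hXG : ∀ v ∈ G, rmk X (MvPolynomial.X v) ∈ T := by
    intro v hv
    exact ⟨MvPolynomial.X v, MvPolynomial.X_mem_supported.mpr hv, rfl⟩
  have hdiag : rmk X (yv true i i) ∈ T := by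
    have h : yv true i i = MvPolynomial.X ⟨(true, i, i), by simp⟩ := by
      rw [yv, dif_pos]
    rw [h]
    exact hXG _ (Or.inl rfl)
  have hU : ∀ a : El X, rmk X (yv false i a) ∈ T := by
    intro a
    by_cases hia : i = a
    · subst hia
      have : yv false i i = 0 := by rw [yv, dif_neg]; simp
      rw [this, map_zero]; exact T.zero_mem
    · by_cases hε : epsb V i a = false
      · have h : yv false i a = MvPolynomial.X ⟨(false, i, a), fun _ => hia⟩ := by
          rw [yv, dif_pos]
        rw [h]
        exact hXG _ (Or.inr ⟨hia, hε.symm⟩)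
      · have hε' : epsb V i a = true := by
          cases h : epsb V i a
          · exact absurd h hε
          · rfl
        have h : yv true i a = MvPolynomial.X ⟨(true, i, a), by simp⟩ := by
          rw [yv, dif_pos]
        have key : rmk X (yv false i a) = rmk X (yv true i i) - rmk X (yv true i a) := by
          linear_combination E1 i a - E4 i i a
        rw [key]
        refine sub_mem hdiag ?_
        rw [h]
        exact hXG _ (Or.inr ⟨hia, hε'.symm⟩)
  have hvar : ∀ v : YIdx X, rmk X (MvPolynomial.X v) ∈ T := by
    rintro ⟨⟨s, a, b⟩, hv⟩
    cases s
    · have h : MvPolynomial.X (⟨(false, a, b), hv⟩ : YIdx X) = yv false a b := by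
        rw [yv, dif_pos]
      rw [h]
      have key : rmk X (yv false a b) = rmk X (yv false i b) - rmk X (yv false i a) := by
        linear_combination E3 a b i - E1 b i
      rw [key]
      exact sub_mem (hU b) (hU a)
    · have h : MvPolynomial.X (⟨(true, a, b), hv⟩ : YIdx X) = yv true a b := by
        rw [yv, dif_pos]
      rw [h]
      have key : rmk X (yv true a b) =
          rmk X (yv true i i) - rmk X (yv false i a) - rmk X (yv false i b) := by
        linear_combination E4 a b i + E4 b i i
      rw [key]
      exact sub_mem (sub_mem hdiag (hU a)) (hU b)
  have hmemp : rmk X p ∈ T := by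
    clear hp
    induction p using MvPolynomial.induction_on with
    | C c =>
        have : (MvPolynomial.C c : MvPolynomial (YIdx X) ℚ) =
            algebraMap ℚ (MvPolynomial (YIdx X) ℚ) c := rfl
        rw [this]
        have : rmk X (algebraMap ℚ (MvPolynomial (YIdx X) ℚ) c) =
            algebraMap ℚ _ c := (Ideal.Quotient.mkₐ ℚ (relIdeal X)).commutes c
        rw [this]
        exact T.algebraMap_mem c
    | add f g hf hg => rw [map_add]; exact add_mem hf hg
    | mul_X f v hf => rw [map_mul]; exact mul_mem hf (hvar v)
  obtain ⟨p', hp's, hp'eq⟩ := hmemp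
  have hp's' : (↑p'.vars : Set (YIdx X)) ⊆ G := MvPolynomial.mem_supported.mp hp's
  -- decompose p' into monomials
  set s := p'.support with hs
  set e := s.equivFin.symm with he
  refine ⟨s.card,
    fun t => MvPolynomial.monomial
      (((e t : YIdx X →₀ ℕ)).filter (fun v => v.1 = (true, i, i)))
      (MvPolynomial.coeff (e t : YIdx X →₀ ℕ) p'),
    fun t => MvPolynomial.monomial
      (((e t : YIdx X →₀ ℕ)).filter (fun v => ¬ v.1 = (true, i, i))) 1,
    ?_, ?_⟩
  · intro t
    set d : YIdx X →₀ ℕ := (e t : YIdx X →₀ ℕ) with hd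
    have hdmem : d ∈ s := (e t).2
    have hdc : MvPolynomial.coeff d p' ≠ 0 := MvPolynomial.mem_support_iff.mp hdmem
    have hdsub : (↑d.support : Set (YIdx X)) ⊆ G := by
      intro v hv
      exact hp's' ((MvPolynomial.mem_vars v).mpr ⟨d, hdmem, hv⟩)
    refine ⟨⟨_, _, rfl⟩, ?_, ⟨_, _, rfl⟩, ?_⟩
    · rw [MvPolynomial.mem_supported, MvPolynomial.vars_monomial hdc]
      intro v hv
      rw [Finset.mem_coe, Finsupp.support_filter, Finset.mem_filter] at hv
      exact hv.2
    · rw [MvPolynomial.mem_supported, MvPolynomial.vars_monomial one_ne_zero]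
      intro v hv
      rw [Finset.mem_coe, Finsupp.support_filter, Finset.mem_filter] at hv
      rcases hdsub hv.1 with h | h
      · exact absurd h hv.2
      · exact h
  · have hsum : ∑ t, (MvPolynomial.monomial
        (((e t : YIdx X →₀ ℕ)).filter (fun v => v.1 = (true, i, i)))
        (MvPolynomial.coeff (e t : YIdx X →₀ ℕ) p')) *
        (MvPolynomial.monomial
        (((e t : YIdx X →₀ ℕ)).filter (fun v => ¬ v.1 = (true, i, i))) 1) = p' := by
      have h1 : ∀ d : YIdx X →₀ ℕ,
          (MvPolynomial.monomial (d.filter (fun v => v.1 = (true, i, i)))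
            (MvPolynomial.coeff d p')) *
          (MvPolynomial.monomial (d.filter (fun v => ¬ v.1 = (true, i, i))) 1) =
          MvPolynomial.monomial d (MvPolynomial.coeff d p') := by
        intro d
        rw [MvPolynomial.monomial_mul, mul_one,
          Finsupp.filter_pos_add_filter_neg d (fun v => v.1 = (true, i, i))]
      calc ∑ t, (MvPolynomial.monomial
            (((e t : YIdx X →₀ ℕ)).filter (fun v => v.1 = (true, i, i)))
            (MvPolynomial.coeff (e t : YIdx X →₀ ℕ) p')) *
            (MvPolynomial.monomial
            (((e t : YIdx X →₀ ℕ)).filter (fun v => ¬ v.1 = (true, i, i))) 1)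
          = ∑ t, MvPolynomial.monomial (e t : YIdx X →₀ ℕ)
              (MvPolynomial.coeff (e t : YIdx X →₀ ℕ) p') := by
            exact Finset.sum_congr rfl fun t _ => h1 _
        _ = ∑ d : s, MvPolynomial.monomial (d : YIdx X →₀ ℕ)
              (MvPolynomial.coeff (d : YIdx X →₀ ℕ) p') :=
            Equiv.sum_comp e (fun d : s => MvPolynomial.monomial (d : YIdx X →₀ ℕ) (MvPolynomial.coeff (d : YIdx X →₀ ℕ) p'))
        _ = ∑ d ∈ s, MvPolynomial.monomial d (MvPolynomial.coeff d p') :=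
            Finset.sum_coe_sort s (fun d => MvPolynomial.monomial d (MvPolynomial.coeff d p'))
        _ = p' := MvPolynomial.support_sum_monomial_coeff p'
    rw [hsum, ← hp'eq]
    rfl
end

section
/- Let g ≥ 2 and X = {1, 2}. For 0 ≤ m ≤ 2g define the monomials z₁ = (y⁺₁₁ y⁺₁₂ y⁻₁₂)^{2g}, z₂ = (y⁺₂₂ y⁺₁₂ y⁻₁₂)^{2g}, y⁺_m = (y⁺₁₁)^{2g} (y⁺₂₂)^{2g} (y⁺₁₂)^{2g+m} (y⁻₁₂)^{2g−m}, and y⁻_m = (y⁺₁₁)^{2g} (y⁺₂₂)^{2g} (y⁺₁₂)^{2g−m} (y⁻₁₂)^{2g+m} in ℚ[Y(X)]. Then for every monomial ζ ∈ ℚ[Y(X)] of total degree at least 8g, the class [ζ] lies in the ideal of R(X) generated by [z₁], [z₂], and [y⁺_m], [y⁻_m] for 0 ≤ m ≤ 2g. (This is the combinatorial content of the proposition that every monomial of degree at least 8g in the Chern classes c^±_{ij} is a combination of the vanishing monomials z₁, z₂, y^±_m for the moduli space associated to SO(5).) -/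
open MvPolynomial

/-- The two-element set X = {1, 2}. -/
def X12 : Finset ℕ := {1, 2}

def el1 : El X12 := ⟨1, by decide⟩
def el2 : El X12 := ⟨2, by decide⟩

noncomputable def z1 (g : ℕ) : MvPolynomial (YIdx X12) ℚ :=
  (yv true el1 el1 * yv true el1 el2 * yv false el1 el2)^(2*g)

noncomputable def z2 (g : ℕ) : MvPolynomial (YIdx X12) ℚ :=
  (yv true el2 el2 * yv true el1 el2 * yv false el1 el2)^(2*g)

noncomputable def yplus (g m : ℕ) : MvPolynomial (YIdx X12) ℚ :=
  (yv true el1 el1)^(2*g) * (yv true el2 el2)^(2*g) *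
    (yv true el1 el2)^(2*g+m) * (yv false el1 el2)^(2*g-m)

noncomputable def yminus (g m : ℕ) : MvPolynomial (YIdx X12) ℚ :=
  (yv true el1 el1)^(2*g) * (yv true el2 el2)^(2*g) *
    (yv true el1 el2)^(2*g-m) * (yv false el1 el2)^(2*g+m)


section Stmt19Generic

variable {T : Type*} [CommRing T] (J : Ideal T) (g : ℕ) (A B : T)

theorem stmt19_aux_central
    (hu : ∀ m m', m + m' = 2*g → (A+B)^(2*g) * (A-B)^(2*g) * A^(2*g+m) * B^m' ∈ J)
    (hv : ∀ m m', m + m' = 2*g → (A+B)^(2*g) * (A-B)^(2*g) * A^m' * B^(2*g+m) ∈ J) :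
    ∀ p q, p + q = 4*g → (A+B)^(2*g+p) * (A-B)^(2*g+q) ∈ J := by
  suffices h : ∀ n r s p q, r + s = n → r + s + p + q = 4*g →
      (A+B)^(2*g+r) * (A-B)^(2*g+s) * A^p * B^q ∈ J by
    intro p q hpq
    simpa using h (p+q) p q 0 0 rfl (by omega)
  intro n
  induction n with
  | zero =>
    intro r s p q hrs hsum
    obtain ⟨rfl, rfl⟩ : r = 0 ∧ s = 0 := by omega
    rcases le_or_gt (2*g) p with hp | hp
    · obtain ⟨m, rfl⟩ : ∃ m, p = 2*g + m := ⟨p - 2*g, by omega⟩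
      exact hu m q (by omega)
    · obtain ⟨m, rfl⟩ : ∃ m, q = 2*g + m := ⟨q - 2*g, by omega⟩
      exact hv m p (by omega)
  | succ n ih =>
    intro r s p q hrs hsum
    rcases r with _ | r'
    · rcases s with _ | s'
      · omega
      · rw [show (A+B)^(2*g+0) * (A-B)^(2*g+(s'+1)) * A^p * B^q
            = ((A+B)^(2*g+0) * (A-B)^(2*g+s') * A^(p+1) * B^q)
              - ((A+B)^(2*g+0) * (A-B)^(2*g+s') * A^p * B^(q+1)) by ring]
        exact sub_mem (ih 0 s' (p+1) q (by omega) (by omega))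
          (ih 0 s' p (q+1) (by omega) (by omega))
    · rw [show (A+B)^(2*g+(r'+1)) * (A-B)^(2*g+s) * A^p * B^q
          = ((A+B)^(2*g+r') * (A-B)^(2*g+s) * A^(p+1) * B^q)
            + ((A+B)^(2*g+r') * (A-B)^(2*g+s) * A^p * B^(q+1)) by ring]
      exact add_mem (ih r' s (p+1) q (by omega) (by omega))
        (ih r' s p (q+1) (by omega) (by omega))

theorem stmt19_aux_outer (C D : T)
    (hcen : ∀ p q, p + q = 4*g → C^(2*g+p) * D^(2*g+q) ∈ J)
    (hz : ∀ x : T, x * (C^(2*g) * (C^2 - D^2)^(2*g)) ∈ J) :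
    ∀ a b, a + b = 2*g → C^(6*g+a) * D^b ∈ J := by
  intro a
  induction a using Nat.strong_induction_on with
  | _ a iha =>
    intro b hab
    have expand : C^(2*g+a) * D^b * (C^2 - D^2)^(2*g)
        = C^(6*g+a) * D^b
          + ∑ k ∈ Finset.range (2*g), C^(2*g+a) * D^b *
              ((-D^2)^(k+1) * (C^2)^(2*g-(k+1)) * ((2*g).choose (k+1) : T)) := by
      rw [show C^2 - D^2 = -D^2 + C^2 by ring, add_pow, Finset.mul_sum,
        Finset.sum_range_succ']
      rw [add_comm]
      congr 1
      · rw [pow_zero, one_mul, Nat.sub_zero, Nat.choose_zero_right, Nat.cast_one, mul_one,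
          ← pow_mul]
        rw [show 6*g+a = 2*g+a+2*(2*g) by omega]
        ring
    have hkey : C^(6*g+a) * D^b
        = C^(2*g+a) * D^b * (C^2 - D^2)^(2*g)
          - ∑ k ∈ Finset.range (2*g), C^(2*g+a) * D^b *
              ((-D^2)^(k+1) * (C^2)^(2*g-(k+1)) * ((2*g).choose (k+1) : T)) := by
      rw [expand]; ring
    rw [hkey]
    refine sub_mem ?_ (Ideal.sum_mem _ ?_)
    · have h2 := hz (C^a * D^b)
      rw [show C^a * D^b * (C^(2*g) * (C^2 - D^2)^(2*g))
          = C^(2*g+a) * D^b * (C^2 - D^2)^(2*g) by ring] at h2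
      exact h2
    · intro k hk
      have hk' : k + 1 ≤ 2*g := by
        simpa using Nat.succ_le_of_lt (Finset.mem_range.mp hk)
      obtain ⟨M, hM⟩ : ∃ M, 2*g - (k+1) = M := ⟨_, rfl⟩
      have hM' : (k+1) + M = 2*g := by omega
      rw [hM, show C^(2*g+a) * D^b * ((-D^2)^(k+1) * (C^2)^M * ((2*g).choose (k+1) : T))
          = ((-1)^(k+1) * ((2*g).choose (k+1) : T)) * (C^(2*g+a+2*M) * D^(b+2*(k+1)))
          by rw [neg_pow]; ring]
      apply Ideal.mul_mem_left
      rcases le_or_gt a (2*(k+1)) with hc | hc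
      · obtain ⟨q, hq⟩ : ∃ q, b + 2*(k+1) = 2*g + q := ⟨b + 2*(k+1) - 2*g, by omega⟩
        rw [hq, show 2*g+a+2*M = 2*g + (a + 2*M) by ring]
        exact hcen _ _ (by omega)
      · obtain ⟨a', ha'⟩ : ∃ a', a = a' + 2*(k+1) := ⟨a - 2*(k+1), by omega⟩
        rw [show 2*g+a+2*M = 6*g + a' by omega]
        exact iha a' (by omega) _ (by omega)

theorem stmt19_aux_key
    (hz1 : ∀ x : T, x * ((A+B) * A * B)^(2*g) ∈ J)
    (hz2 : ∀ x : T, x * ((A-B) * A * B)^(2*g) ∈ J)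
    (hu : ∀ m m', m + m' = 2*g → (A+B)^(2*g) * (A-B)^(2*g) * A^(2*g+m) * B^m' ∈ J)
    (hv : ∀ m m', m + m' = 2*g → (A+B)^(2*g) * (A-B)^(2*g) * A^m' * B^(2*g+m) ∈ J) :
    ∀ i j, 8*g ≤ i + j → (A+B)^i * (A-B)^j ∈ J := by
  have hcen := stmt19_aux_central J g A B hu hv
  have hzC : ∀ x : T, x * ((A+B)^(2*g) * ((A+B)^2 - (A-B)^2)^(2*g)) ∈ J := by
    intro x
    have h : x * ((A+B)^(2*g) * ((A+B)^2 - (A-B)^2)^(2*g))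
        = (x * 4^(2*g)) * ((A+B) * A * B)^(2*g) := by
      rw [show (A+B)^2 - (A-B)^2 = 4*(A*B) by ring, mul_pow, mul_pow, mul_pow, mul_pow]
      ring
    rw [h]; exact hz1 _
  have hzD : ∀ x : T, x * ((A-B)^(2*g) * ((A-B)^2 - (A+B)^2)^(2*g)) ∈ J := by
    intro x
    have h : x * ((A-B)^(2*g) * ((A-B)^2 - (A+B)^2)^(2*g))
        = (x * (-4)^(2*g)) * ((A-B) * A * B)^(2*g) := by
      rw [show (A-B)^2 - (A+B)^2 = (-4)*(A*B) by ring, mul_pow, mul_pow, mul_pow, mul_pow]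
      ring
    rw [h]; exact hz2 _
  have hcenD : ∀ p q, p + q = 4*g → (A-B)^(2*g+p) * (A+B)^(2*g+q) ∈ J := by
    intro p q h
    rw [mul_comm]; exact hcen q p (by omega)
  have houtC := stmt19_aux_outer J g (A+B) (A-B) hcen hzC
  have houtD := stmt19_aux_outer J g (A-B) (A+B) hcenD hzD
  have key8 : ∀ i j, i + j = 8*g → (A+B)^i * (A-B)^j ∈ J := by
    intro i j hij
    rcases le_or_gt i (2*g - 1) with hi | hi
    · obtain ⟨a, rfl⟩ : ∃ a, j = 6*g + a := ⟨j - 6*g, by omega⟩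
      rw [mul_comm]
      exact houtD a i (by omega)
    · rcases le_or_gt i (6*g) with hi2 | hi2
      · obtain ⟨p, rfl⟩ : ∃ p, i = 2*g + p := ⟨i - 2*g, by omega⟩
        obtain ⟨q, rfl⟩ : ∃ q, j = 2*g + q := ⟨j - 2*g, by omega⟩
        exact hcen p q (by omega)
      · obtain ⟨a, rfl⟩ : ∃ a, i = 6*g + a := ⟨i - 6*g, by omega⟩
        exact houtC a j (by omega)
  intro i j hij
  obtain ⟨i0, i1, j0, j1, hi, hj, h8⟩ :
      ∃ i0 i1 j0 j1, i = i0 + i1 ∧ j = j0 + j1 ∧ i0 + j0 = 8*g :=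
    ⟨min i (8*g), i - min i (8*g), 8*g - min i (8*g), j - (8*g - min i (8*g)),
      by omega, by omega, by omega⟩
  subst hi hj
  rw [pow_add, pow_add, show (A+B)^i0 * (A+B)^i1 * ((A-B)^j0 * (A-B)^j1)
      = ((A+B)^i1 * (A-B)^j1) * ((A+B)^i0 * (A-B)^j0) by ring]
  exact Ideal.mul_mem_left _ _ (key8 i0 j0 h8)

theorem stmt19_aux_reduce
    (htwo : ∀ x : T, 2 * x ∈ J → x ∈ J)
    (hz1 : ∀ x : T, x * ((A+B) * A * B)^(2*g) ∈ J)
    (hz2 : ∀ x : T, x * ((A-B) * A * B)^(2*g) ∈ J)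
    (hu : ∀ m m', m + m' = 2*g → (A+B)^(2*g) * (A-B)^(2*g) * A^(2*g+m) * B^m' ∈ J)
    (hv : ∀ m m', m + m' = 2*g → (A+B)^(2*g) * (A-B)^(2*g) * A^m' * B^(2*g+m) ∈ J) :
    ∀ p q r s, 8*g ≤ p + q + r + s → (A+B)^p * (A-B)^q * A^r * B^s ∈ J := by
  have key := stmt19_aux_key J g A B hz1 hz2 hu hv
  intro p q r s
  induction r generalizing p q with
  | zero =>
    induction s generalizing p q with
    | zero =>
      intro h
      simpa using key p q (by omega)
    | succ s' ihs =>
      intro h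
      apply htwo
      rw [show 2 * ((A+B)^p * (A-B)^q * A^0 * B^(s'+1))
          = (A+B)^(p+1) * (A-B)^q * A^0 * B^s' - (A+B)^p * (A-B)^(q+1) * A^0 * B^s' by ring]
      exact sub_mem (ihs (p+1) q (by omega)) (ihs p (q+1) (by omega))
  | succ r' ihr =>
    intro h
    apply htwo
    rw [show 2 * ((A+B)^p * (A-B)^q * A^(r'+1) * B^s)
        = (A+B)^(p+1) * (A-B)^q * A^r' * B^s + (A+B)^p * (A-B)^(q+1) * A^r' * B^s by ring]
    exact add_mem (ihr (p+1) q (by omega)) (ihr p (q+1) (by omega))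

end Stmt19Generic

namespace Stmt19Inst

noncomputable abbrev Q19 := MvPolynomial (YIdx X12) ℚ ⧸ relIdeal X12

noncomputable def AA : Q19 := rmk X12 (yv true el1 el2)
noncomputable def BB : Q19 := rmk X12 (yv false el1 el2)

def w1 : YIdx X12 := ⟨(true, el1, el1), by decide⟩
def w2 : YIdx X12 := ⟨(true, el1, el2), by decide⟩
def w3 : YIdx X12 := ⟨(true, el2, el1), by decide⟩
def w4 : YIdx X12 := ⟨(true, el2, el2), by decide⟩
def w5 : YIdx X12 := ⟨(false, el1, el2), by decide⟩
def w6 : YIdx X12 := ⟨(false, el2, el1), by decide⟩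

lemma mem_all : ∀ v : YIdx X12, v ∈ ({w1,w2,w3,w4,w5,w6} : Finset (YIdx X12)) := by
  decide

lemma Xw1 : (MvPolynomial.X w1 : MvPolynomial (YIdx X12) ℚ) = yv true el1 el1 := by
  simp [yv, w1]
lemma Xw2 : (MvPolynomial.X w2 : MvPolynomial (YIdx X12) ℚ) = yv true el1 el2 := by
  simp [yv, w2]
lemma Xw3 : (MvPolynomial.X w3 : MvPolynomial (YIdx X12) ℚ) = yv true el2 el1 := by
  simp [yv, w3]
lemma Xw4 : (MvPolynomial.X w4 : MvPolynomial (YIdx X12) ℚ) = yv true el2 el2 := by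
  simp [yv, w4]
lemma Xw5 : (MvPolynomial.X w5 : MvPolynomial (YIdx X12) ℚ) = yv false el1 el2 := by
  exact ((by rw [yv]; exact dif_pos _) :
    yv _ _ _ = (MvPolynomial.X _ : MvPolynomial (YIdx X12) ℚ)).symm
lemma Xw6 : (MvPolynomial.X w6 : MvPolynomial (YIdx X12) ℚ) = yv false el2 el1 := by
  exact ((by rw [yv]; exact dif_pos _) :
    yv _ _ _ = (MvPolynomial.X _ : MvPolynomial (YIdx X12) ℚ)).symm

lemma rmk_eq_zero {p : MvPolynomial (YIdx X12) ℚ} (h : p ∈ relIdeal X12) :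
    rmk X12 p = 0 := Ideal.Quotient.eq_zero_iff_mem.mpr h

lemma gen1 (i j : El X12) : yv false i j + yv false j i ∈ relIdeal X12 :=
  Ideal.subset_span (Or.inl (Or.inl (Or.inl ⟨i, j, rfl⟩)))
lemma gen2 (i j : El X12) : yv true i j - yv true j i ∈ relIdeal X12 :=
  Ideal.subset_span (Or.inl (Or.inl (Or.inr ⟨i, j, rfl⟩)))
lemma gen4 (i j k : El X12) : yv true i j - yv true j k + yv false k i ∈ relIdeal X12 :=
  Ideal.subset_span (Or.inr ⟨i, j, k, rfl⟩)

lemma hB21 : rmk X12 (yv false el2 el1) = - BB := by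
  have h := rmk_eq_zero (gen1 el1 el2)
  rw [map_add] at h
  unfold BB
  linear_combination h

lemma hA21 : rmk X12 (yv true el2 el1) = AA := by
  have h := rmk_eq_zero (gen2 el1 el2)
  rw [map_sub] at h
  unfold AA
  linear_combination -h

lemma hA11 : rmk X12 (yv true el1 el1) = AA + BB := by
  have h := rmk_eq_zero (gen4 el1 el1 el2)
  rw [map_add, map_sub] at h
  have h2 := hB21
  unfold AA BB at *
  linear_combination h - h2

lemma hA22 : rmk X12 (yv true el2 el2) = AA - BB := by
  have h := rmk_eq_zero (gen4 el2 el2 el1)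
  rw [map_add, map_sub] at h
  have h2 := hA21
  unfold AA BB at *
  linear_combination h + h2

lemma htwo (x : Q19) {J : Ideal Q19} (h : 2 * x ∈ J) : x ∈ J := by
  have h1 : (algebraMap ℚ Q19 (1/2)) * (2 * x) ∈ J := Ideal.mul_mem_left _ _ h
  have h2 : (algebraMap ℚ Q19 (1/2)) * (2 * x) = x := by
    rw [← mul_assoc, show (2 : Q19) = algebraMap ℚ Q19 2 from (map_ofNat _ 2).symm,
      ← map_mul]
    norm_num
  rwa [h2] at h1

lemma rmk_z1 (g : ℕ) : rmk X12 (z1 g) = ((AA+BB) * AA * BB)^(2*g) := by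
  rw [z1, map_pow, map_mul, map_mul, hA11]
  rfl

lemma rmk_z2 (g : ℕ) : rmk X12 (z2 g) = ((AA-BB) * AA * BB)^(2*g) := by
  rw [z2, map_pow, map_mul, map_mul, hA22]
  rfl

lemma rmk_yplus (g m m' : ℕ) (h : m + m' = 2*g) :
    rmk X12 (yplus g m) = (AA+BB)^(2*g) * (AA-BB)^(2*g) * AA^(2*g+m) * BB^m' := by
  rw [yplus, map_mul, map_mul, map_mul, map_pow, map_pow, map_pow, map_pow,
    hA11, hA22, show 2*g - m = m' by omega]
  rfl

lemma rmk_yminus (g m m' : ℕ) (h : m + m' = 2*g) :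
    rmk X12 (yminus g m) = (AA+BB)^(2*g) * (AA-BB)^(2*g) * AA^m' * BB^(2*g+m) := by
  rw [yminus, map_mul, map_mul, map_mul, map_pow, map_pow, map_pow, map_pow,
    hA11, hA22, show 2*g - m = m' by omega]
  rfl

end Stmt19Inst

set_option maxHeartbeats 1000000 in
theorem stmt19 (g : ℕ) (hg : 2 ≤ g)
    (ζ : MvPolynomial (YIdx X12) ℚ) (hζ : IsMonomial ζ)
    (hdeg : 8*g ≤ ζ.totalDegree) :
    rmk X12 ζ ∈ Ideal.span
      ({rmk X12 (z1 g), rmk X12 (z2 g)} ∪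
       {q | ∃ m ≤ 2*g, q = rmk X12 (yplus g m) ∨ q = rmk X12 (yminus g m)}) := by
  classical
  open Stmt19Inst in
  set S : Set Q19 :=
    ({rmk X12 (z1 g), rmk X12 (z2 g)} ∪
     {q | ∃ m ≤ 2*g, q = rmk X12 (yplus g m) ∨ q = rmk X12 (yminus g m)}) with hS
  show rmk X12 ζ ∈ Ideal.span S
  set J : Ideal Q19 := Ideal.span S with hJ
  have hz1 : ∀ x : Q19, x * ((AA+BB) * AA * BB)^(2*g) ∈ J := by
    intro x
    refine Ideal.mul_mem_left _ _ (Ideal.subset_span ?_)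
    rw [← rmk_z1 g]
    exact Set.mem_union_left _ (Set.mem_insert _ _)
  have hz2 : ∀ x : Q19, x * ((AA-BB) * AA * BB)^(2*g) ∈ J := by
    intro x
    refine Ideal.mul_mem_left _ _ (Ideal.subset_span ?_)
    rw [← rmk_z2 g]
    exact Set.mem_union_left _ (Set.mem_insert_of_mem _ rfl)
  have hu : ∀ m m', m + m' = 2*g →
      (AA+BB)^(2*g) * (AA-BB)^(2*g) * AA^(2*g+m) * BB^m' ∈ J := by
    intro m m' h
    refine Ideal.subset_span ?_
    rw [← rmk_yplus g m m' h]
    exact Set.mem_union_right _ ⟨m, by omega, Or.inl rfl⟩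
  have hv : ∀ m m', m + m' = 2*g →
      (AA+BB)^(2*g) * (AA-BB)^(2*g) * AA^m' * BB^(2*g+m) ∈ J := by
    intro m m' h
    refine Ideal.subset_span ?_
    rw [← rmk_yminus g m m' h]
    exact Set.mem_union_right _ ⟨m, by omega, Or.inr rfl⟩
  have reduce := stmt19_aux_reduce J g AA BB (fun x => htwo x) hz1 hz2 hu hv
  obtain ⟨d, c, rfl⟩ := hζ
  by_cases hc : c = 0
  · subst hc
    rw [monomial_zero, map_zero]
    exact Ideal.zero_mem _
  · have hdeg' : 8*g ≤ d.sum fun _ e => e := by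
      rwa [MvPolynomial.totalDegree_monomial d hc] at hdeg
    have hsub : d.support ⊆ ({w1,w2,w3,w4,w5,w6} : Finset (YIdx X12)) :=
      fun v _ => mem_all v
    have hsum6 : 8*g ≤ d w1 + (d w2 + (d w3 + (d w4 + (d w5 + d w6)))) := by
      rw [Finsupp.sum_of_support_subset d hsub _ (fun i _ => rfl),
        Finset.sum_insert (by decide), Finset.sum_insert (by decide),
        Finset.sum_insert (by decide), Finset.sum_insert (by decide),
        Finset.sum_insert (by decide), Finset.sum_singleton] at hdeg'
      exact hdeg'
    rw [monomial_eq,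
      Finsupp.prod_of_support_subset d hsub _ (fun i _ => pow_zero _),
      Finset.prod_insert (by decide), Finset.prod_insert (by decide),
      Finset.prod_insert (by decide), Finset.prod_insert (by decide),
      Finset.prod_insert (by decide), Finset.prod_singleton,
      map_mul, map_mul, map_mul, map_mul, map_mul, map_mul,
      map_pow, map_pow, map_pow, map_pow, map_pow, map_pow,
      Xw1, Xw2, Xw3, Xw4, Xw5, Xw6, hA11, hA22, hA21, hB21]
    apply Ideal.mul_mem_left
    show (AA+BB)^(d w1) * (AA^(d w2) * (AA^(d w3) * ((AA-BB)^(d w4) *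
      (BB^(d w5) * (-BB)^(d w6))))) ∈ J
    rcases Nat.even_or_odd (d w6) with he | ho
    · rw [he.neg_pow BB]
      rw [show (AA+BB)^(d w1) * (AA^(d w2) * (AA^(d w3) * ((AA-BB)^(d w4) *
            (BB^(d w5) * BB^(d w6)))))
          = (AA+BB)^(d w1) * (AA-BB)^(d w4) * AA^(d w2 + d w3) * BB^(d w5 + d w6) by
        rw [pow_add, pow_add]; ring]
      exact reduce _ _ _ _ (by omega)
    · rw [ho.neg_pow BB]
      rw [show (AA+BB)^(d w1) * (AA^(d w2) * (AA^(d w3) * ((AA-BB)^(d w4) *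
            (BB^(d w5) * -BB^(d w6)))))
          = -((AA+BB)^(d w1) * (AA-BB)^(d w4) * AA^(d w2 + d w3) * BB^(d w5 + d w6)) by
        rw [pow_add, pow_add]; ring]
      exact Submodule.neg_mem J (reduce _ _ _ _ (by omega))
end
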